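/- Let K = (T, A)_ω be an ALCHIO weighted knowledge base. If some interpretation has finite cost, then the optimal cost of K_ω satisfies optc(K_ω) ≤ W · (n·|A| + n²·|T|), where W is the maximum finite weight assigned by ω and n = |A| + |T| + 2^{2|T|²}. -/

import Mathlib

namespace DL

/-! ### Syntax -/

abbrev IndName := ℕ
abbrev CName := ℕ
abbrev RName := ℕ

/-- Roles: role names and inverse roles. -/
inductive Role where
  | name : RName → Role
  | inv  : RName → Role
deriving DecidableEq

/-- `ALCHIO` concepts. -/
inductive Concept where
  | top  : Concept
  | bot  : Concept
  | atom : CName → Concept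
  | nom  : IndName → Concept
  | neg  : Concept → Concept
  | conj : Concept → Concept → Concept
  | ex   : Role → Concept → Concept
deriving DecidableEq

/-- TBox axioms: concept inclusions and role inclusions. -/
inductive Axiom where
  | ci : Concept → Concept → Axiom
  | ri : Role → Role → Axiom
deriving DecidableEq

/-- ABox assertions. -/
inductive Assertion where
  | ca : CName → IndName → Assertion
  | ra : RName → IndName → IndName → Assertion
deriving DecidableEq

/-! ### Interpretations -/

/-- A DL interpretation with domain a subset of a universe `U`.  Individual names are
interpreted via `indI` (under the standard names assumption, the individual names of the
ABox under consideration are interpreted "as themselves", i.e. injectively). -/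
structure Interp (U : Type) where
  dom : Set U
  indI : IndName → U
  cI : CName → Set U
  rI : RName → Set (U × U)
  cI_sub : ∀ A, cI A ⊆ dom
  rI_sub : ∀ r p, p ∈ rI r → p.1 ∈ dom ∧ p.2 ∈ dom

variable {U : Type}

/-- Every individual name denotes an element of the domain. -/
def Interp.Proper (I : Interp U) : Prop := ∀ a, I.indI a ∈ I.dom

def Role.interp (I : Interp U) : Role → Set (U × U)
  | Role.name r => I.rI r
  | Role.inv r  => {p | (p.2, p.1) ∈ I.rI r}

def Concept.interp (I : Interp U) : Concept → Set U
  | Concept.top => I.dom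
  | Concept.bot => ∅
  | Concept.atom A => I.cI A
  | Concept.nom a => {I.indI a} ∩ I.dom
  | Concept.neg C => I.dom \ Concept.interp I C
  | Concept.conj C D => Concept.interp I C ∩ Concept.interp I D
  | Concept.ex r C => {d | ∃ e, (d, e) ∈ Role.interp I r ∧ e ∈ Concept.interp I C}

def Assertion.sat (I : Interp U) : Assertion → Prop
  | Assertion.ca A a => I.indI a ∈ I.cI A
  | Assertion.ra r a b => (I.indI a, I.indI b) ∈ I.rI r

/-! ### Violations and cost -/

/-- Violations of a concept inclusion `C ⊑ D`. -/
def vioCI (I : Interp U) (C D : Concept) : Set U :=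
  Concept.interp I C \ Concept.interp I D

/-- Violations of a role inclusion `r ⊑ s`. -/
def vioRI (I : Interp U) (r s : Role) : Set (U × U) :=
  Role.interp I r \ Role.interp I s

/-- The number of violations of an axiom. -/
noncomputable def Axiom.vioCount (I : Interp U) : Axiom → ℕ∞
  | Axiom.ci C D => (vioCI I C D).encard
  | Axiom.ri r s => (vioRI I r s).encard

open Classical in
/-- The cost of an interpretation w.r.t. a weighted knowledge base `(T, A)` with weight
functions `wT` (on TBox axioms) and `wA` (on ABox assertions). -/
noncomputable def cost (T : Finset Axiom) (A : Finset Assertion)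
    (wT : Axiom → ℕ∞) (wA : Assertion → ℕ∞) (I : Interp U) : ℕ∞ :=
  (∑ τ ∈ T, wT τ * Axiom.vioCount I τ) +
    ∑ α ∈ A, (if Assertion.sat I α then 0 else wA α)

/-! ### Queries -/

inductive Term where
  | var : ℕ → Term
  | ind : IndName → Term
deriving DecidableEq

inductive QAtom where
  | ca : CName → Term → QAtom
  | ra : RName → Term → Term → QAtom
deriving DecidableEq

/-- A Boolean conjunctive query: a finite set of atoms, all of whose variables are
(implicitly) existentially quantified. -/
abbrev BCQ := Finset QAtom

def Term.eval (I : Interp U) (π : ℕ → U) : Term → U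
  | Term.var v => π v
  | Term.ind a => I.indI a

def QAtom.sat (I : Interp U) (π : ℕ → U) : QAtom → Prop
  | QAtom.ca A t => Term.eval I π t ∈ I.cI A
  | QAtom.ra r t t' => (Term.eval I π t, Term.eval I π t') ∈ I.rI r

/-- Satisfaction of a BCQ in an interpretation. -/
def satQ (I : Interp U) (q : BCQ) : Prop :=
  ∃ π : ℕ → U, (∀ v, π v ∈ I.dom) ∧ ∀ a ∈ q, QAtom.sat I π a

/-- An instance query is a BCQ with a single atom. -/
def IsIQ (q : BCQ) : Prop := ∃ a : QAtom, q = {a}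

/-! ### Cost-based semantics -/

/-- `k`-satisfiability: some interpretation has cost at most `k`. -/
def ksat (T : Finset Axiom) (A : Finset Assertion)
    (wT : Axiom → ℕ∞) (wA : Assertion → ℕ∞) (k : ℕ) : Prop :=
  ∃ (U : Type) (I : Interp U), I.Proper ∧ cost T A wT wA I ≤ (k : ℕ∞)

/-- `K ⊨ₚᵏ q`: some interpretation of cost at most `k` satisfies `q`. -/
def satP (T : Finset Axiom) (A : Finset Assertion)
    (wT : Axiom → ℕ∞) (wA : Assertion → ℕ∞) (k : ℕ) (q : BCQ) : Prop :=
  ∃ (U : Type) (I : Interp U), I.Proper ∧ cost T A wT wA I ≤ (k : ℕ∞) ∧ satQ I q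

/-- `K ⊨꜀ᵏ q`: every interpretation of cost at most `k` satisfies `q`. -/
def satC (T : Finset Axiom) (A : Finset Assertion)
    (wT : Axiom → ℕ∞) (wA : Assertion → ℕ∞) (k : ℕ) (q : BCQ) : Prop :=
  ∀ (U : Type) (I : Interp U), I.Proper → cost T A wT wA I ≤ (k : ℕ∞) → satQ I q

/-- The optimal cost of a weighted knowledge base. -/
noncomputable def optCost (T : Finset Axiom) (A : Finset Assertion)
    (wT : Axiom → ℕ∞) (wA : Assertion → ℕ∞) : ℕ∞ :=
  sInf {c : ℕ∞ | ∃ (U : Type) (I : Interp U), I.Proper ∧ cost T A wT wA I = c}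

/-- `K ⊨ₚᵒᵖᵗ q`: some interpretation of optimal cost satisfies `q`. -/
noncomputable def satPopt (T : Finset Axiom) (A : Finset Assertion)
    (wT : Axiom → ℕ∞) (wA : Assertion → ℕ∞) (q : BCQ) : Prop :=
  ∃ (U : Type) (I : Interp U), I.Proper ∧ cost T A wT wA I = optCost T A wT wA ∧ satQ I q

/-- `K ⊨꜀ᵒᵖᵗ q`: every interpretation of optimal cost satisfies `q`. -/
noncomputable def satCopt (T : Finset Axiom) (A : Finset Assertion)
    (wT : Axiom → ℕ∞) (wA : Assertion → ℕ∞) (q : BCQ) : Prop :=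
  ∀ (U : Type) (I : Interp U), I.Proper → cost T A wT wA I = optCost T A wT wA → satQ I q

/-! ### Occurrences of symbols -/

def Role.base : Role → RName
  | Role.name r => r
  | Role.inv r => r

def Concept.cnames : Concept → Finset CName
  | Concept.atom A => {A}
  | Concept.neg C => C.cnames
  | Concept.conj C D => C.cnames ∪ D.cnames
  | Concept.ex _ C => C.cnames
  | _ => ∅

def Concept.rnames : Concept → Finset RName
  | Concept.neg C => C.rnames
  | Concept.conj C D => C.rnames ∪ D.rnames
  | Concept.ex r C => insert r.base C.rnames
  | _ => ∅

def Concept.indNames : Concept → Finset IndName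
  | Concept.nom a => {a}
  | Concept.neg C => C.indNames
  | Concept.conj C D => C.indNames ∪ D.indNames
  | Concept.ex _ C => C.indNames
  | _ => ∅

def Axiom.cnames : Axiom → Finset CName
  | Axiom.ci C D => C.cnames ∪ D.cnames
  | Axiom.ri _ _ => ∅

def Axiom.rnames : Axiom → Finset RName
  | Axiom.ci C D => C.rnames ∪ D.rnames
  | Axiom.ri r s => {r.base, s.base}

def Axiom.indNames : Axiom → Finset IndName
  | Axiom.ci C D => C.indNames ∪ D.indNames
  | Axiom.ri _ _ => ∅

def Assertion.cnames : Assertion → Finset CName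
  | Assertion.ca A _ => {A}
  | Assertion.ra _ _ _ => ∅

def Assertion.rnames : Assertion → Finset RName
  | Assertion.ca _ _ => ∅
  | Assertion.ra r _ _ => {r}

def Assertion.indNames : Assertion → Finset IndName
  | Assertion.ca _ a => {a}
  | Assertion.ra _ a b => {a, b}

/-- The individual names occurring in an ABox. -/
def aboxInds (A : Finset Assertion) : Finset IndName := A.biUnion Assertion.indNames

/-- The individual names occurring in a KB. -/
def kbInds (T : Finset Axiom) (A : Finset Assertion) : Finset IndName :=
  T.biUnion Axiom.indNames ∪ aboxInds A

def Term.indNames : Term → Finset IndName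
  | Term.var _ => ∅
  | Term.ind a => {a}

def QAtom.indNames : QAtom → Finset IndName
  | QAtom.ca _ t => t.indNames
  | QAtom.ra _ t t' => t.indNames ∪ t'.indNames

def QAtom.cnames : QAtom → Finset CName
  | QAtom.ca A _ => {A}
  | QAtom.ra _ _ _ => ∅

def qInds (q : BCQ) : Finset IndName := q.biUnion QAtom.indNames

def qCnames (q : BCQ) : Finset CName := q.biUnion QAtom.cnames

/-! ### Sizes -/

def Concept.size : Concept → ℕ
  | Concept.top => 1
  | Concept.bot => 1
  | Concept.atom _ => 1
  | Concept.nom _ => 1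
  | Concept.neg C => C.size + 1
  | Concept.conj C D => C.size + D.size + 1
  | Concept.ex _ C => C.size + 2

def Axiom.size : Axiom → ℕ
  | Axiom.ci C D => C.size + D.size + 1
  | Axiom.ri _ _ => 3

def Assertion.size : Assertion → ℕ
  | Assertion.ca _ _ => 2
  | Assertion.ra _ _ _ => 3

def tboxSize (T : Finset Axiom) : ℕ := ∑ τ ∈ T, τ.size

def aboxSize (A : Finset Assertion) : ℕ := ∑ α ∈ A, α.size

/-! ### DL-Lite fragments -/

/-- Basic concepts: concept names and unqualified existential restrictions `∃r` (with a
possibly inverse role `r`), the latter rendered as `∃r.⊤`. -/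
inductive IsBasic : Concept → Prop
  | atom (A : CName) : IsBasic (Concept.atom A)
  | ex (r : Role) : IsBasic (Concept.ex r Concept.top)

/-- A `DL-Lite_core` axiom: `B ⊑ C` or `B ⊓ C ⊑ ⊥` with `B, C` basic concepts. -/
def IsCoreAxiom (τ : Axiom) : Prop :=
  (∃ B C, τ = Axiom.ci B C ∧ IsBasic B ∧ IsBasic C) ∨
  (∃ B C, τ = Axiom.ci (Concept.conj B C) Concept.bot ∧ IsBasic B ∧ IsBasic C)

def IsDLLiteCore (T : Finset Axiom) : Prop := ∀ τ ∈ T, IsCoreAxiom τ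

/-- Concepts built from basic concepts using `¬`, `⊓` (and hence also `⊔`). -/
inductive IsBoolConcept : Concept → Prop
  | basic {C} : IsBasic C → IsBoolConcept C
  | neg {C} : IsBoolConcept C → IsBoolConcept (Concept.neg C)
  | conj {C D} : IsBoolConcept C → IsBoolConcept D → IsBoolConcept (Concept.conj C D)

/-- A `DL-Lite_bool^H` axiom: a concept inclusion between Boolean combinations of basic
concepts, or a role inclusion. -/
def IsBoolHAxiom (τ : Axiom) : Prop :=
  (∃ C D, τ = Axiom.ci C D ∧ IsBoolConcept C ∧ IsBoolConcept D) ∨ (∃ r s, τ = Axiom.ri r s)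

def IsDLLiteBoolH (T : Finset Axiom) : Prop := ∀ τ ∈ T, IsBoolHAxiom τ

/-- The maximum finite weight assigned by the weight functions (`∞` weights contribute
`0` via `ENat.toNat`). -/
noncomputable def maxFinWeight (T : Finset Axiom) (A : Finset Assertion)
    (wT : Axiom → ℕ∞) (wA : Assertion → ℕ∞) : ℕ :=
  (T.sup fun τ => (wT τ).toNat) ⊔ (A.sup fun α => (wA α).toNat)


/-!
Collapse a finite-cost interpretation `I` to its filtration: every element is replaced by a fixed
representative of its type, the set of TBox subconcepts it satisfies. By the truth lemma the
collapse preserves membership in every TBox subconcept (nominals included, since a type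
containing `{a}` is realised only by `a`). Hence an axiom without violations in `I`, in
particular every axiom of weight `∞`, has none in the filtration, and an ABox assertion violated
there was already violated in `I`, so its weight is finite. The filtration has at most
`2 ^ |T|` elements, so each axiom has at most `n²` violations, each costing at most `W`.
-/

lemma Role.interp_subset_dom (I : Interp U) (r : Role) : r.interp I ⊆ I.dom ×ˢ I.dom := by
  intro p hp
  cases r with
  | name r => exact I.rI_sub r p hp
  | inv r => exact (I.rI_sub r (p.2, p.1) hp).symm

lemma Concept.interp_subset_dom (I : Interp U) (C : Concept) : C.interp I ⊆ I.dom := by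
  induction C with
  | top => exact subset_rfl
  | bot => exact Set.empty_subset _
  | atom A => exact I.cI_sub A
  | nom a => exact Set.inter_subset_right
  | neg C _ => exact Set.sdiff_subset
  | conj C D ihC _ => exact Set.inter_subset_left.trans ihC
  | ex r C _ =>
    rintro d ⟨e, hde, -⟩
    exact (r.interp_subset_dom I hde).1

lemma Axiom.vioCount_le_encard_dom_sq (I : Interp U) (τ : Axiom) :
    τ.vioCount I ≤ I.dom.encard ^ 2 := by
  cases τ with
  | ci C D =>
    calc (vioCI I C D).encard ≤ I.dom.encard :=
          Set.encard_mono (Set.sdiff_subset.trans (C.interp_subset_dom I))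
      _ ≤ I.dom.encard ^ 2 := by
          rcases eq_or_ne I.dom.encard 0 with h | h
          · simp [h]
          · exact le_self_pow (Order.one_le_iff_ne_zero.mpr h) two_ne_zero
  | ri r s =>
    calc (vioRI I r s).encard ≤ (I.dom ×ˢ I.dom).encard :=
          Set.encard_mono (Set.sdiff_subset.trans (r.interp_subset_dom I))
      _ = I.dom.encard ^ 2 := by rw [Set.encard_prod, sq]

def Concept.subconcepts : Concept → Finset Concept
  | .neg C => insert (.neg C) C.subconcepts
  | .conj C D => insert (.conj C D) (C.subconcepts ∪ D.subconcepts)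
  | .ex r C => insert (.ex r C) C.subconcepts
  | C => {C}

def Axiom.subconcepts : Axiom → Finset Concept
  | .ci C D => C.subconcepts ∪ D.subconcepts
  | .ri _ _ => ∅

def tboxClosure (T : Finset Axiom) : Finset Concept := T.biUnion Axiom.subconcepts

def SubconceptClosed (cl : Finset Concept) : Prop := ∀ C ∈ cl, C.subconcepts ⊆ cl

lemma Concept.mem_subconcepts_self (C : Concept) : C ∈ C.subconcepts := by
  cases C <;> simp [subconcepts]

lemma Concept.subconcepts_subset_of_mem {C D : Concept} (h : D ∈ C.subconcepts) :
    D.subconcepts ⊆ C.subconcepts := by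
  induction C with
  | neg C ih =>
    rcases Finset.mem_insert.mp h with rfl | h
    · exact subset_rfl
    · exact (ih h).trans (Finset.subset_insert _ _)
  | conj C C' ih ih' =>
    rcases Finset.mem_insert.mp h with rfl | h
    · exact subset_rfl
    · refine Finset.Subset.trans ?_ (Finset.subset_insert _ _)
      rcases Finset.mem_union.mp h with h | h
      · exact (ih h).trans Finset.subset_union_left
      · exact (ih' h).trans Finset.subset_union_right
  | ex r C ih =>
    rcases Finset.mem_insert.mp h with rfl | h
    · exact subset_rfl
    · exact (ih h).trans (Finset.subset_insert _ _)
  | _ => rw [Finset.mem_singleton.mp h]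

lemma Concept.card_subconcepts_le_size (C : Concept) : C.subconcepts.card ≤ C.size := by
  induction C with
  | neg C ih =>
    have := Finset.card_insert_le (Concept.neg C) C.subconcepts
    simp only [subconcepts, size]; omega
  | conj C D ihC ihD =>
    have := Finset.card_insert_le (Concept.conj C D) (C.subconcepts ∪ D.subconcepts)
    have := Finset.card_union_le C.subconcepts D.subconcepts
    simp only [subconcepts, size]; omega
  | ex r C ih =>
    have := Finset.card_insert_le (Concept.ex r C) C.subconcepts
    simp only [subconcepts, size]; omega
  | _ => simp [subconcepts, size]

lemma subconceptClosed_tboxClosure (T : Finset Axiom) : SubconceptClosed (tboxClosure T) := by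
  intro C hC
  obtain ⟨τ, hτ, hCτ⟩ := Finset.mem_biUnion.mp hC
  refine Finset.Subset.trans ?_ (Finset.subset_biUnion_of_mem Axiom.subconcepts hτ)
  cases τ with
  | ci D E =>
    rcases Finset.mem_union.mp hCτ with h | h
    · exact (Concept.subconcepts_subset_of_mem h).trans Finset.subset_union_left
    · exact (Concept.subconcepts_subset_of_mem h).trans Finset.subset_union_right
  | ri => simp [Axiom.subconcepts] at hCτ

lemma card_tboxClosure_le (T : Finset Axiom) : (tboxClosure T).card ≤ tboxSize T := by
  refine Finset.card_biUnion_le.trans (Finset.sum_le_sum fun τ _ => ?_)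
  cases τ with
  | ci C D =>
    have := Finset.card_union_le C.subconcepts D.subconcepts
    have := C.card_subconcepts_le_size
    have := D.card_subconcepts_le_size
    simp only [Axiom.subconcepts, Axiom.size]; omega
  | ri => simp [Axiom.subconcepts]

lemma card_le_tboxSize (T : Finset Axiom) : T.card ≤ tboxSize T := by
  rw [Finset.card_eq_sum_ones]
  exact Finset.sum_le_sum fun τ _ => by cases τ <;> simp [Axiom.size]

lemma card_le_aboxSize (A : Finset Assertion) : A.card ≤ aboxSize A := by
  rw [Finset.card_eq_sum_ones]
  exact Finset.sum_le_sum fun α _ => by cases α <;> simp [Assertion.size]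

section Filtration

variable (I : Interp U) (cl : Finset Concept)

open Classical in
noncomputable def Interp.conceptType (d : U) : Finset Concept := cl.filter (d ∈ ·.interp I)

open Classical in
/-- Junk (`I.indI 0`) when `t` is not the type of a domain element. -/
noncomputable def Interp.typeRep (t : Finset Concept) : U :=
  if h : ∃ d ∈ I.dom, I.conceptType cl d = t then h.choose else I.indI 0

noncomputable def Interp.collapse (d : U) : U := I.typeRep cl (I.conceptType cl d)

noncomputable def Interp.filtration : Interp U where
  dom := I.collapse cl '' I.dom
  indI a := I.collapse cl (I.indI a)
  cI A := I.collapse cl '' I.cI A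
  rI r := Prod.map (I.collapse cl) (I.collapse cl) '' I.rI r
  cI_sub A := Set.image_mono (I.cI_sub A)
  rI_sub r := by
    rintro _ ⟨p, hp, rfl⟩
    exact ⟨⟨p.1, (I.rI_sub r p hp).1, rfl⟩, ⟨p.2, (I.rI_sub r p hp).2, rfl⟩⟩

variable {I cl}

lemma Interp.mem_conceptType {C : Concept} (hC : C ∈ cl) {d : U} :
    C ∈ I.conceptType cl d ↔ d ∈ C.interp I := by
  classical
  simp [Interp.conceptType, hC]

lemma Interp.mem_interp_iff_of_conceptType_eq {C : Concept} (hC : C ∈ cl) {d e : U}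
    (h : I.conceptType cl d = I.conceptType cl e) : d ∈ C.interp I ↔ e ∈ C.interp I := by
  rw [← I.mem_conceptType hC, h, I.mem_conceptType hC]

lemma Interp.conceptType_collapse {d : U} (hd : d ∈ I.dom) :
    I.conceptType cl (I.collapse cl d) = I.conceptType cl d := by
  have h : ∃ e ∈ I.dom, I.conceptType cl e = I.conceptType cl d := ⟨d, hd, rfl⟩
  rw [Interp.collapse, Interp.typeRep, dif_pos h]
  exact h.choose_spec.2

lemma Interp.conceptType_eq_of_collapse_eq {d e : U} (hd : d ∈ I.dom) (he : e ∈ I.dom)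
    (h : I.collapse cl d = I.collapse cl e) : I.conceptType cl d = I.conceptType cl e := by
  rw [← I.conceptType_collapse hd, h, I.conceptType_collapse he]

lemma Role.interp_filtration (r : Role) :
    r.interp (I.filtration cl) = Prod.map (I.collapse cl) (I.collapse cl) '' r.interp I := by
  cases r with
  | name r => rfl
  | inv r =>
    ext ⟨x, y⟩
    constructor
    · rintro ⟨⟨a, b⟩, hab, heq⟩
      obtain ⟨rfl, rfl⟩ := Prod.mk.inj heq
      exact ⟨(b, a), hab, rfl⟩
    · rintro ⟨⟨a, b⟩, hab, heq⟩
      obtain ⟨rfl, rfl⟩ := Prod.mk.inj heq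
      exact ⟨(b, a), hab, rfl⟩

lemma Interp.proper_filtration (hP : I.Proper) : (I.filtration cl).Proper :=
  fun a => ⟨I.indI a, hP a, rfl⟩

theorem Concept.mem_interp_filtration_iff (hcl : SubconceptClosed cl) (hP : I.Proper)
    {C : Concept} (hC : C ∈ cl) {d : U} (hd : d ∈ I.dom) :
    I.collapse cl d ∈ C.interp (I.filtration cl) ↔ d ∈ C.interp I := by
  induction C generalizing d with
  | top => exact iff_of_true ⟨d, hd, rfl⟩ hd
  | bot => exact Iff.rfl
  | atom A =>
    refine ⟨?_, fun h => ⟨d, h, rfl⟩⟩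
    rintro ⟨e, he, hed⟩
    exact (I.mem_interp_iff_of_conceptType_eq hC
      (I.conceptType_eq_of_collapse_eq (I.cI_sub A he) hd hed)).mp he
  | nom a =>
    refine ⟨?_, fun ⟨hda, _⟩ => ⟨congrArg _ hda, d, hd, rfl⟩⟩
    rintro ⟨hda, -⟩
    exact (I.mem_interp_iff_of_conceptType_eq hC
      (I.conceptType_eq_of_collapse_eq hd (hP a) hda)).mpr ⟨rfl, hP a⟩
  | neg C ih =>
    have ih := ih (hcl _ hC (by simp [subconcepts, mem_subconcepts_self])) hd
    exact and_congr (iff_of_true ⟨d, hd, rfl⟩ hd) (not_congr ih)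
  | conj C D ihC ihD =>
    exact and_congr (ihC (hcl _ hC (by simp [subconcepts, mem_subconcepts_self])) hd)
      (ihD (hcl _ hC (by simp [subconcepts, mem_subconcepts_self])) hd)
  | ex r C ih =>
    have hCcl : C ∈ cl := hcl _ hC (by simp [subconcepts, mem_subconcepts_self])
    show (∃ e, _ ∈ r.interp (I.filtration cl) ∧ e ∈ C.interp (I.filtration cl)) ↔
      ∃ e, (d, e) ∈ r.interp I ∧ e ∈ C.interp I
    rw [Role.interp_filtration]
    constructor
    · rintro ⟨_, ⟨⟨a, b⟩, hab, heq⟩, hbC⟩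
      obtain ⟨had, rfl⟩ := Prod.mk.inj heq
      have hab' := r.interp_subset_dom I hab
      have ha : a ∈ (Concept.ex r C).interp I := ⟨b, hab, (ih hCcl hab'.2).mp hbC⟩
      exact (I.mem_interp_iff_of_conceptType_eq hC
        (I.conceptType_eq_of_collapse_eq hab'.1 hd had)).mp ha
    · rintro ⟨e, hde, heC⟩
      exact ⟨_, ⟨(d, e), hde, rfl⟩, (ih hCcl (r.interp_subset_dom I hde).2).mpr heC⟩

lemma Axiom.vioCount_filtration_eq_zero (hcl : SubconceptClosed cl) (hP : I.Proper)
    {τ : Axiom} (hτ : τ.subconcepts ⊆ cl) (h : τ.vioCount I = 0) :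
    τ.vioCount (I.filtration cl) = 0 := by
  cases τ with
  | ci C D =>
    have hC : C ∈ cl := hτ (Finset.mem_union_left _ C.mem_subconcepts_self)
    have hD : D ∈ cl := hτ (Finset.mem_union_right _ D.mem_subconcepts_self)
    have hCD : C.interp I ⊆ D.interp I := Set.sdiff_eq_empty.mp (Set.encard_eq_zero.mp h)
    show (vioCI _ C D).encard = 0
    rw [Set.encard_eq_zero, vioCI, Set.sdiff_eq_empty]
    intro x hx
    obtain ⟨d, hd, rfl⟩ := C.interp_subset_dom _ hx
    exact (D.mem_interp_filtration_iff hcl hP hD hd).mpr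
      (hCD ((C.mem_interp_filtration_iff hcl hP hC hd).mp hx))
  | ri r s =>
    have hrs : r.interp I ⊆ s.interp I := Set.sdiff_eq_empty.mp (Set.encard_eq_zero.mp h)
    show (vioRI _ r s).encard = 0
    rw [Set.encard_eq_zero, vioRI, Set.sdiff_eq_empty, Role.interp_filtration,
      Role.interp_filtration]
    exact Set.image_mono hrs

lemma Assertion.sat_filtration {α : Assertion} (h : α.sat I) : α.sat (I.filtration cl) := by
  cases α with
  | ca A a => exact ⟨I.indI a, h, rfl⟩
  | ra r a b => exact ⟨(I.indI a, I.indI b), h, rfl⟩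

lemma Interp.encard_filtration_dom_le : (I.filtration cl).dom.encard ≤ 2 ^ cl.card := by
  classical
  calc (I.filtration cl).dom.encard ≤ (cl.powerset.image (I.typeRep cl) : Set U).encard := by
        refine Set.encard_mono ?_
        rintro _ ⟨d, -, rfl⟩
        exact Finset.mem_coe.mpr (Finset.mem_image_of_mem _
          (Finset.mem_powerset.mpr (Finset.filter_subset _ _)))
    _ ≤ 2 ^ cl.card := by
        rw [Set.encard_coe_eq_coe_finsetCard]
        exact_mod_cast Finset.card_image_le.trans (Finset.card_powerset cl).le

end Filtration

theorem exists_interp_encard_dom_le (T : Finset Axiom) {I : Interp U} (hP : I.Proper) :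
    ∃ J : Interp U, J.Proper ∧ J.dom.encard ≤ 2 ^ tboxSize T ∧
      (∀ τ ∈ T, τ.vioCount I = 0 → τ.vioCount J = 0) ∧ ∀ α : Assertion, α.sat I → α.sat J := by
  refine ⟨I.filtration (tboxClosure T), I.proper_filtration hP, ?_, fun τ hτ h => ?_,
    fun α => Assertion.sat_filtration⟩
  · exact I.encard_filtration_dom_le.trans
      (pow_le_pow_right₀ one_le_two (by exact_mod_cast card_tboxClosure_le T))
  · exact Axiom.vioCount_filtration_eq_zero (subconceptClosed_tboxClosure T) hP
      (Finset.subset_biUnion_of_mem _ hτ) h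

section Cost

variable {T : Finset Axiom} {A : Finset Assertion} {wT : Axiom → ℕ∞} {wA : Assertion → ℕ∞}
  {I : Interp U}

lemma le_maxFinWeight_of_mem_tbox {τ : Axiom} (hτ : τ ∈ T) (hw : wT τ ≠ ⊤) :
    wT τ ≤ maxFinWeight T A wT wA := by
  rw [← ENat.natCast_toNat hw, maxFinWeight]
  exact_mod_cast (Finset.le_sup (f := fun τ => (wT τ).toNat) hτ).trans le_sup_left

lemma le_maxFinWeight_of_mem_abox {α : Assertion} (hα : α ∈ A) (hw : wA α ≠ ⊤) :
    wA α ≤ maxFinWeight T A wT wA := by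
  rw [← ENat.natCast_toNat hw, maxFinWeight]
  exact_mod_cast (Finset.le_sup (f := fun α => (wA α).toNat) hα).trans le_sup_right

lemma vioCount_eq_zero_of_cost_lt_top (h : cost T A wT wA I < ⊤) {τ : Axiom} (hτ : τ ∈ T)
    (hw : wT τ = ⊤) : τ.vioCount I = 0 := by
  by_contra hne
  have := WithTop.sum_lt_top.mp (le_self_add.trans_lt h) τ hτ
  rw [hw, ENat.top_mul hne] at this
  exact this.ne rfl

lemma weight_ne_top_of_cost_lt_top (h : cost T A wT wA I < ⊤) {α : Assertion} (hα : α ∈ A)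
    (hs : ¬ α.sat I) : wA α ≠ ⊤ := by
  classical
  have := WithTop.sum_lt_top.mp (le_add_self.trans_lt h) α hα
  rw [if_neg hs] at this
  exact this.ne

lemma optCost_le_cost (hP : I.Proper) : optCost T A wT wA ≤ cost T A wT wA I :=
  sInf_le ⟨U, I, hP, rfl⟩

theorem cost_le_of_encard_dom_le {m : ℕ} (hm : I.dom.encard ≤ m)
    (hT : ∀ τ ∈ T, wT τ = ⊤ → τ.vioCount I = 0) (hA : ∀ α ∈ A, ¬ α.sat I → wA α ≠ ⊤) :
    cost T A wT wA I ≤ ((maxFinWeight T A wT wA * (A.card + T.card * m ^ 2) : ℕ) : ℕ∞) := by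
  classical
  set W := maxFinWeight T A wT wA
  have hτ : ∀ τ ∈ T, wT τ * τ.vioCount I ≤ ((W * m ^ 2 : ℕ) : ℕ∞) := by
    intro τ hτ
    by_cases hw : wT τ = ⊤
    · simp [hT τ hτ hw]
    · push_cast
      exact mul_le_mul' (le_maxFinWeight_of_mem_tbox hτ hw)
        ((τ.vioCount_le_encard_dom_sq I).trans (pow_le_pow_left' hm 2))
  have hα : ∀ α ∈ A, (if α.sat I then 0 else wA α) ≤ (W : ℕ∞) := by
    intro α hα
    split_ifs with hs
    · exact bot_le
    · exact le_maxFinWeight_of_mem_abox hα (hA α hα hs)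
  calc cost T A wT wA I ≤ T.card • ((W * m ^ 2 : ℕ) : ℕ∞) + A.card • (W : ℕ∞) :=
        add_le_add (Finset.sum_le_card_nsmul _ _ _ hτ) (Finset.sum_le_card_nsmul _ _ _ hα)
    _ = ((W * (A.card + T.card * m ^ 2) : ℕ) : ℕ∞) := by
        simp only [nsmul_eq_mul]; push_cast; ring

end Cost

theorem statement5_general (T : Finset Axiom) (A : Finset Assertion)
    (wT : Axiom → ℕ∞) (wA : Assertion → ℕ∞)
    (h : ∃ (U : Type) (I : Interp U), I.Proper ∧ cost T A wT wA I < ⊤) :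
    optCost T A wT wA ≤
      ((maxFinWeight T A wT wA *
        ((aboxSize A + tboxSize T + 2 ^ (2 * tboxSize T ^ 2)) * aboxSize A +
          (aboxSize A + tboxSize T + 2 ^ (2 * tboxSize T ^ 2)) ^ 2 * tboxSize T) : ℕ) : ℕ∞) := by
  obtain ⟨U, I, hP, hfin⟩ := h
  obtain ⟨J, hJ, hdom, hvio, hsat⟩ := exists_interp_encard_dom_le T hP
  set n := aboxSize A + tboxSize T + 2 ^ (2 * tboxSize T ^ 2)
  have hn : 2 ^ tboxSize T ≤ n := le_add_left (Nat.pow_le_pow_right two_pos (by nlinarith))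
  have hJn : J.dom.encard ≤ n := hdom.trans (by exact_mod_cast hn)
  have hcost := cost_le_of_encard_dom_le (T := T) (A := A) (wT := wT) (wA := wA) hJn
    (fun τ hτ hw => hvio τ hτ (vioCount_eq_zero_of_cost_lt_top hfin hτ hw))
    (fun α hα hs => weight_ne_top_of_cost_lt_top hfin hα (mt (hsat α) hs))
  refine (optCost_le_cost hJ).trans (hcost.trans ?_)
  have hA : A.card ≤ n * aboxSize A :=
    (card_le_aboxSize A).trans (Nat.le_mul_of_pos_left _ (by positivity))
  have hT : T.card * n ^ 2 ≤ n ^ 2 * tboxSize T := by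
    rw [mul_comm]
    exact Nat.mul_le_mul_left _ (card_le_tboxSize T)
  exact_mod_cast Nat.mul_le_mul_left _ (add_le_add hA hT)

/-- If some interpretation has finite cost, then the optimal cost is at
most `W · (n·|A| + n²·|T|)`, where `W` is the maximum finite weight and
`n = |A| + |T| + 2^(2|T|²)`. -/
theorem statement5 (T : Finset Axiom) (A : Finset Assertion)
    (wT : Axiom → ℕ∞) (wA : Assertion → ℕ∞)
    (hwT : ∀ τ ∈ T, 1 ≤ wT τ) (hwA : ∀ α ∈ A, 1 ≤ wA α)
    (h : ∃ (U : Type) (I : Interp U), I.Proper ∧ cost T A wT wA I < ⊤) :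
    optCost T A wT wA ≤
      ((maxFinWeight T A wT wA *
        ((aboxSize A + tboxSize T + 2 ^ (2 * tboxSize T ^ 2)) * aboxSize A +
          (aboxSize A + tboxSize T + 2 ^ (2 * tboxSize T ^ 2)) ^ 2 * tboxSize T) : ℕ) : ℕ∞) :=
  statement5_general T A wT wA h

end DL
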